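/- arXiv:2208.09557 — 6 statements merged into one kernel-verified Lean document; each statement's English description precedes it below -/
import Mathlib

section
/- Let n be a positive integer and let L be a subgroup of ℤ^n such that L ∩ ℕ^n = {0} (i.e., the only element of L with all coordinates nonnegative is the zero vector). Then for every b ∈ ℤ^n, the set {ℓ ∈ L : ℓ ≤ b componentwise} is finite. -/
/-- If `L` is a subgroup of `ℤ^n` with `L ∩ ℕ^n = {0}`, then for every
`b ∈ ℤ^n` the set of lattice elements `ℓ ∈ L` with `ℓ ≤ b` componentwise is finite. -/
theorem lattice_below_finite (n : ℕ) (hn : 0 < n) (L : AddSubgroup (Fin n → ℤ))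
    (hL : (L : Set (Fin n → ℤ)) ∩ {v | ∀ i, 0 ≤ v i} = {0}) :
    ∀ b : Fin n → ℤ, {l : Fin n → ℤ | l ∈ L ∧ l ≤ b}.Finite := by
  intro b
  by_contra h
  have h : {l : Fin n → ℤ | l ∈ L ∧ l ≤ b}.Infinite := h
  set f := h.natEmbedding with hf
  -- map to ℕ^n
  have hpwo : (Set.univ : Set (Fin n → ℕ)).IsPWO := Set.isPWO_univ_iff.mpr inferInstance
  obtain ⟨m, k, hmk, hle⟩ := Set.PartiallyWellOrderedOn.exists_lt hpwo (f := fun j i => (b i - (f j).1 i).toNat) (fun _ => trivial)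
  have key : ∀ j (i : Fin n), ((fun j i => (b i - (f j).1 i).toNat) j i : ℤ) = b i - (f j).1 i := by
    intro j i
    exact Int.toNat_of_nonneg (by linarith [(f j).2.2 i])
  have hle' : (f m).1 - (f k).1 ∈ (L : Set (Fin n → ℤ)) ∩ {v | ∀ i, 0 ≤ v i} := by
    constructor
    · exact sub_mem (f m).2.1 (f k).2.1
    · intro i
      have := hle i
      have h1 := key m i
      have h2 := key k i
      simp only [Pi.sub_apply]
      have : ((fun j i => (b i - (f j).1 i).toNat) m i : ℤ) ≤ (fun j i => (b i - (f j).1 i).toNat) k i := by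
        exact_mod_cast this
      rw [h1, h2] at this
      linarith
  rw [hL] at hle'
  have : (f m).1 = (f k).1 := by
    have := sub_eq_zero.mp hle'
    exact this
  have : f m = f k := Subtype.ext this
  exact absurd (f.injective this) (by omega)
end

section
/- Let L be a subgroup of ℤ^n. Then L ∩ ℕ^n = {0} if and only if the real linear span of L (inside ℝ^n, via the canonical embedding ℤ^n ↪ ℝ^n) intersects the nonnegative orthant {x ∈ ℝ^n : x_i ≥ 0 for all i} only in the zero vector. -/
/-- For a subgroup `L ≤ ℤ^n`, one has `L ∩ ℕ^n = {0}` if and only if the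
real linear span of (the image in `ℝ^n` of) `L` meets the nonnegative orthant only in `0`. -/
theorem lattice_orthant_iff_span (n : ℕ) (L : AddSubgroup (Fin n → ℤ)) :
    (L : Set (Fin n → ℤ)) ∩ {v | ∀ i, 0 ≤ v i} = {0} ↔
      (Submodule.span ℝ
          ((fun (v : Fin n → ℤ) (i : Fin n) => (v i : ℝ)) '' (L : Set (Fin n → ℤ))) :
        Set (Fin n → ℝ)) ∩ {x | ∀ i, 0 ≤ x i} = {0} := by
  constructor
  · intro h
    apply Set.eq_singleton_iff_unique_mem.mpr
    refine ⟨⟨Submodule.zero_mem _, fun i => le_refl (0:ℝ)⟩, ?_⟩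
    rintro x ⟨hxspan, hxpos⟩
    by_contra hx0
    -- there is a strictly positive coordinate
    obtain ⟨j₀, hj₀⟩ : ∃ j, 0 < x j := by
      by_contra hc
      push_neg at hc
      exact hx0 (funext fun j => le_antisymm (hc j) (hxpos j))
    -- write x as a finite real combination of lattice vectors
    rw [SetLike.mem_coe, Submodule.mem_span_set'] at hxspan
    obtain ⟨m, c, g, hg⟩ := hxspan
    -- choose integer preimages u i ∈ L
    have hgu : ∀ i : Fin m, ∃ u : Fin n → ℤ, u ∈ L ∧
        (fun j => ((u j : ℝ))) = (g i : Fin n → ℝ) := by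
      intro i
      obtain ⟨u, hu, he⟩ := (g i).2
      exact ⟨u, hu, he⟩
    choose u huL hue using hgu
    have hxj : ∀ j, x j = ∑ i, c i * (u i j : ℝ) := by
      intro j
      rw [← hg]
      simp only [Finset.sum_apply, Pi.smul_apply, smul_eq_mul]
      refine Finset.sum_congr rfl fun i _ => ?_
      rw [← hue i]
    -- the constant C
    set C : Fin n → ℝ := fun j => ∑ i, |(u i j : ℝ)| with hC
    have hC0 : ∀ j, 0 ≤ C j := fun j => Finset.sum_nonneg fun i _ => abs_nonneg _
    -- the lattice approximants
    set p : ℕ → (Fin n → ℤ) := fun t => ∑ i, ⌊(t:ℝ) * c i⌋ • u i with hp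
    have hpL : ∀ t, p t ∈ L := fun t =>
      AddSubgroup.sum_mem L fun i _ => AddSubgroup.zsmul_mem L (huL i) _
    have hbound : ∀ t : ℕ, ∀ j, |((p t j : ℝ)) - (t:ℝ) * x j| ≤ C j := by
      intro t j
      have hptj : ((p t j : ℝ)) = ∑ i, (⌊(t:ℝ) * c i⌋ : ℝ) * (u i j : ℝ) := by
        have : p t j = ∑ i, ⌊(t:ℝ) * c i⌋ * u i j := by
          simp [hp, Finset.sum_apply, smul_eq_mul]
        rw [this]
        push_cast
        ring
      have htx : (t:ℝ) * x j = ∑ i, ((t:ℝ) * c i) * (u i j : ℝ) := by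
        rw [hxj j, Finset.mul_sum]
        refine Finset.sum_congr rfl fun i _ => by ring
      rw [hptj, htx, ← Finset.sum_sub_distrib]
      refine (Finset.abs_sum_le_sum_abs _ _).trans ?_
      rw [hC]
      refine Finset.sum_le_sum fun i _ => ?_
      have : (⌊(t:ℝ) * c i⌋ : ℝ) * (u i j:ℝ) - ((t:ℝ) * c i) * (u i j:ℝ)
          = ((⌊(t:ℝ) * c i⌋ : ℝ) - (t:ℝ) * c i) * (u i j:ℝ) := by ring
      rw [this, abs_mul]
      have h1 : |(⌊(t:ℝ) * c i⌋ : ℝ) - (t:ℝ) * c i| ≤ 1 := by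
        rw [abs_sub_comm, abs_of_nonneg (sub_nonneg.mpr (Int.floor_le _))]
        linarith [Int.sub_one_lt_floor ((t:ℝ) * c i)]
      calc |(⌊(t:ℝ) * c i⌋ : ℝ) - (t:ℝ) * c i| * |(u i j:ℝ)|
          ≤ 1 * |(u i j:ℝ)| := by
            exact mul_le_mul_of_nonneg_right h1 (abs_nonneg _)
        _ = |(u i j:ℝ)| := one_mul _
    -- choose the gap M
    obtain ⟨M, hM⟩ : ∃ M : ℕ, ∀ j, 0 < x j → 2 * C j < (M:ℝ) * x j := by
      have hne : (Finset.univ : Finset (Fin n)).Nonempty := ⟨j₀, Finset.mem_univ _⟩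
      obtain ⟨M, hM⟩ := exists_nat_gt (Finset.univ.sup' hne fun j => 2 * C j / x j)
      refine ⟨M, fun j hj => ?_⟩
      have := (Finset.le_sup' (fun j => 2 * C j / x j) (Finset.mem_univ j)).trans_lt hM
      exact (div_lt_iff₀ hj).mp this
    -- pigeonhole on the coordinates where x vanishes
    set gq : ℕ → (Fin n → ℤ) := fun k => fun j => if 0 < x j then 0 else p (k * M) j with hgq
    have hmapsto : Set.MapsTo gq Set.univ
        (Set.univ.pi fun j => Set.Icc (-⌈C j⌉) ⌈C j⌉) := by
      intro k _
      intro j _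
      simp only [hgq]
      by_cases hj : 0 < x j
      · simp only [if_pos hj]
        refine ⟨?_, Int.ceil_nonneg (hC0 j)⟩
        simpa using Int.ceil_nonneg (hC0 j)
      · simp only [hj, if_neg hj]
        have hxj0 : x j = 0 := le_antisymm (not_lt.mp hj) (hxpos j)
        have := hbound (k * M) j
        rw [hxj0, mul_zero, sub_zero] at this
        have h1 : ((p (k * M) j : ℝ)) ≤ ⌈C j⌉ := (le_of_abs_le this).trans (Int.le_ceil _)
        have h2 : (-(⌈C j⌉:ℝ)) ≤ (p (k * M) j : ℝ) := by
          have := neg_abs_le ((p (k*M) j : ℝ))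
          have h3 : (C j) ≤ (⌈C j⌉:ℝ) := Int.le_ceil _
          nlinarith [abs_le.mp (hbound (k*M) j)]
        constructor
        · exact_mod_cast h2
        · exact_mod_cast h1
    have hfin : (Set.univ.pi fun j => (Set.Icc (-⌈C j⌉) ⌈C j⌉ : Set ℤ)).Finite :=
      Set.Finite.pi fun j => Set.finite_Icc _ _
    obtain ⟨k, -, k', -, hkk', heq⟩ :=
      Set.infinite_univ.exists_ne_map_eq_of_mapsTo hmapsto hfin
    -- wlog k < k'
    wlog hlt : k < k' generalizing k k'
    · exact this k' k hkk'.symm heq.symm (hkk'.lt_or_gt.resolve_left hlt)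
    set t := k * M with hT
    set t' := k' * M with hT'
    set v := p t' - p t with hv
    have hvL : v ∈ L := AddSubgroup.sub_mem L (hpL t') (hpL t)
    have ht' : (t:ℝ) + M ≤ (t':ℝ) := by
      have h1 : k + 1 ≤ k' := hlt
      have h2 : t + M ≤ t' := by
        calc t + M = (k+1) * M := by rw [hT]; ring
        _ ≤ k' * M := Nat.mul_le_mul_right M h1
      exact_mod_cast h2
    have hpos : ∀ j, 0 < x j → 0 < v j := by
      intro j hj
      have hb1 := abs_le.mp (hbound t j)
      have hb2 := abs_le.mp (hbound t' j)
      have hMj := hM j hj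
      have hlt0 : (0:ℝ) < (v j : ℝ) := by
        have hvj : ((v j : ℤ) : ℝ) = (p t' j : ℝ) - (p t j : ℝ) := by
          rw [hv]; push_cast [Pi.sub_apply]; ring
        rw [hvj]
        nlinarith [hj, hb1.1, hb1.2, hb2.1, hb2.2]
      exact_mod_cast hlt0
    have hvmem : v ∈ (L : Set (Fin n → ℤ)) ∩ {w | ∀ i, 0 ≤ w i} := by
      refine ⟨hvL, fun j => ?_⟩
      by_cases hj : 0 < x j
      · exact (hpos j hj).le
      · have hj' := congrFun heq j
        simp only [hgq, if_neg hj] at hj'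
        simp [hv, Pi.sub_apply, hT, hT', hj']
    rw [h] at hvmem
    have hv0 : v = 0 := Set.mem_singleton_iff.mp hvmem
    have := hpos j₀ hj₀
    rw [hv0] at this
    exact lt_irrefl 0 this
  · intro h
    apply Set.eq_singleton_iff_unique_mem.mpr
    refine ⟨⟨L.zero_mem, fun i => le_refl (0:ℤ)⟩, ?_⟩
    rintro v ⟨hvL, hvpos⟩
    have hmem : (fun i => ((v i : ℝ))) ∈
        (Submodule.span ℝ ((fun (v : Fin n → ℤ) (i : Fin n) => (v i : ℝ)) ''
          (L : Set (Fin n → ℤ))) : Set (Fin n → ℝ)) ∩ {x | ∀ i, 0 ≤ x i} := by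
      refine ⟨Submodule.subset_span ⟨v, hvL, rfl⟩, fun i => by show (0:ℝ) ≤ ((v i : ℤ):ℝ); exact_mod_cast hvpos i⟩
    rw [h] at hmem
    funext j
    have h2 := congrFun hmem j
    simp only [Pi.zero_apply] at h2 ⊢
    exact_mod_cast h2
end

section
/- Let L be a subgroup of ℤ^n with L ∩ ℕ^n = {0}. Then there exists a vector w ∈ ℤ^n with w_i > 0 for every i such that the inner product ⟨w, ℓ⟩ = Σ_i w_i ℓ_i equals 0 for every ℓ ∈ L. (Such a w gives a grading of the polynomial ring in which each variable x_i has positive integer degree w_i and with respect to which the lattice ideal I_L is homogeneous.) -/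
open Finset

private lemma sim_approx {ι : Type*} [Fintype ι] (c : ι → ℝ) {ε : ℝ} (hε : 0 < ε) :
    ∃ q : ℕ, 0 < q ∧ ∃ p : ι → ℤ, ∀ j, |(q : ℝ) * c j - p j| < ε := by
  obtain ⟨N, hN⟩ := exists_nat_gt (1 / ε)
  have hN0 : (0:ℝ) < N := lt_trans (by positivity) hN
  have hNε : 1 / (N:ℝ) < ε := by
    rw [div_lt_iff₀ hN0]
    rw [div_lt_iff₀ hε] at hN
    nlinarith
  have key : ∀ a b : ℕ, a < b →
      (∀ j, (⌊Int.fract ((a:ℝ) * c j) * N⌋ = ⌊Int.fract ((b:ℝ) * c j) * N⌋)) →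
      ∃ q : ℕ, 0 < q ∧ ∃ p : ι → ℤ, ∀ j, |(q : ℝ) * c j - p j| < ε := by
    intro a b hab hfl
    refine ⟨b - a, by omega, fun j => ⌊(b:ℝ) * c j⌋ - ⌊(a:ℝ) * c j⌋, fun j => ?_⟩
    have hcast : ((b - a : ℕ) : ℝ) = (b:ℝ) - a := by
      push_cast [Nat.cast_sub hab.le]; ring
    have h1 : |Int.fract ((a:ℝ) * c j) * N - Int.fract ((b:ℝ) * c j) * N| < 1 :=
      Int.abs_sub_lt_one_of_floor_eq_floor (hfl j)
    have h2 : |Int.fract ((a:ℝ) * c j) - Int.fract ((b:ℝ) * c j)| < 1 / N := by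
      rw [lt_div_iff₀ hN0]
      calc |Int.fract ((a:ℝ) * c j) - Int.fract ((b:ℝ) * c j)| * N
          = |Int.fract ((a:ℝ) * c j) * N - Int.fract ((b:ℝ) * c j) * N| := by
            rw [← sub_mul, abs_mul, abs_of_pos hN0]
        _ < 1 := h1
    have hfa := Int.self_sub_floor ((a:ℝ) * c j)
    have hfb := Int.self_sub_floor ((b:ℝ) * c j)
    have heq : ((b - a : ℕ):ℝ) * c j - ((⌊(b:ℝ) * c j⌋ - ⌊(a:ℝ) * c j⌋ : ℤ) : ℝ)
        = Int.fract ((b:ℝ) * c j) - Int.fract ((a:ℝ) * c j) := by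
      rw [hcast, ← hfa, ← hfb]
      push_cast
      ring
    rw [heq]
    rw [abs_sub_comm] at h2
    linarith
  have hFin : ∀ (q : ℕ) (j : ι), (⌊Int.fract ((q:ℝ) * c j) * N⌋).toNat < N := by
    intro q j
    have h1 : Int.fract ((q:ℝ) * c j) * N < N := by
      nlinarith [Int.fract_lt_one ((q:ℝ) * c j), Int.fract_nonneg ((q:ℝ) * c j)]
    have h2 : (0:ℝ) ≤ Int.fract ((q:ℝ) * c j) * N := by
      nlinarith [Int.fract_nonneg ((q:ℝ) * c j)]
    have h3 : ⌊Int.fract ((q:ℝ) * c j) * N⌋ < (N:ℤ) := by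
      rw [Int.floor_lt]; exact_mod_cast h1
    have h4 : 0 ≤ ⌊Int.fract ((q:ℝ) * c j) * N⌋ := Int.floor_nonneg.mpr h2
    omega
  set F : ℕ → ι → Fin N := fun q j => ⟨(⌊Int.fract ((q:ℝ) * c j) * N⌋).toNat, hFin q j⟩
    with hF
  obtain ⟨a, b, hab, hFab⟩ := Finite.exists_ne_map_eq_of_infinite F
  have hfl : ∀ a b : ℕ, F a = F b →
      ∀ j, ⌊Int.fract ((a:ℝ) * c j) * N⌋ = ⌊Int.fract ((b:ℝ) * c j) * N⌋ := by
    intro a b h j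
    have := congrFun h j
    rw [hF] at this
    simp only [Fin.mk.injEq] at this
    have h4a : 0 ≤ ⌊Int.fract ((a:ℝ) * c j) * N⌋ := Int.floor_nonneg.mpr (by
      nlinarith [Int.fract_nonneg ((a:ℝ) * c j)])
    have h4b : 0 ≤ ⌊Int.fract ((b:ℝ) * c j) * N⌋ := Int.floor_nonneg.mpr (by
      nlinarith [Int.fract_nonneg ((b:ℝ) * c j)])
    omega
  rcases lt_or_gt_of_ne hab with h | h
  · exact key a b h (hfl a b hFab)
  · exact key b a h (hfl b a hFab.symm)

set_option maxHeartbeats 1000000 in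
/-- If `L ≤ ℤ^n` satisfies `L ∩ ℕ^n = {0}`, then there exists a strictly
positive integer weight vector `w` with `⟨w, ℓ⟩ = 0` for every `ℓ ∈ L`. -/
theorem exists_positive_grading (n : ℕ) (L : AddSubgroup (Fin n → ℤ))
    (hL : (L : Set (Fin n → ℤ)) ∩ {v | ∀ i, 0 ≤ v i} = {0}) :
    ∃ w : Fin n → ℤ, (∀ i, 0 < w i) ∧ ∀ l ∈ L, ∑ i, w i * l i = 0 := by
  rcases Nat.eq_zero_or_pos n with hn | hn
  · subst hn
    refine ⟨fun _ => 1, fun i => absurd i.2 (Nat.not_lt_zero _), fun l _ => by simp⟩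
  have hL0 : ∀ y ∈ L, (∀ i, (0:ℤ) ≤ y i) → y = 0 := by
    intro y hy h0
    have : y ∈ (L : Set (Fin n → ℤ)) ∩ {v | ∀ i, 0 ≤ v i} := ⟨hy, h0⟩
    rw [hL] at this; exact this
  set g : L → (Fin n → ℝ) := fun l i => (l.1 i : ℝ) with hg
  set U : Submodule ℝ (Fin n → ℝ) := Submodule.span ℝ (Set.range g) with hU
  have hkey : ∀ x ∈ U, (∀ i, 0 ≤ x i) → x = 0 := by
    intro x hxU hx0
    by_contra hxne
    obtain ⟨i0, hi0⟩ := Function.ne_iff.mp hxne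
    have hxi0 : 0 < x i0 := lt_of_le_of_ne (hx0 i0) (Ne.symm hi0)
    rw [hU, Finsupp.mem_span_range_iff_exists_finsupp] at hxU
    obtain ⟨cf, hcf⟩ := hxU
    set s := cf.support with hs
    have hxrep : ∀ i, x i = ∑ l ∈ s, cf l * g l i := by
      intro i
      rw [← hcf, Finsupp.sum]
      simp [Finset.sum_apply]
      rfl
    set M : ℝ := 1 + ∑ l ∈ s, ∑ i, |g l i| with hM
    have hM1 : 1 ≤ M := by
      rw [hM]
      have : (0:ℝ) ≤ ∑ l ∈ s, ∑ i, |g l i| := by positivity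
      linarith
    have hmin0 : 0 < min 1 (x i0) := lt_min one_pos hxi0
    set ε : ℝ := min 1 (x i0) / (2 * M) with hε
    have hε0 : 0 < ε := by
      rw [hε]; apply div_pos hmin0; linarith
    obtain ⟨q, hq0, p, hp⟩ := sim_approx (ι := ↑s) (fun l => cf l.1) hε0
    set y : Fin n → ℤ := ∑ l ∈ s.attach, p l • ((l : L) : Fin n → ℤ) with hy
    have hyL : y ∈ L := by
      rw [hy]
      exact AddSubgroup.sum_mem L (fun l _ => AddSubgroup.zsmul_mem L (l.1).2 _)
    have hyc : ∀ i, (y i : ℝ) = ∑ l ∈ s.attach, (p l : ℝ) * g l.1 i := by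
      intro i
      rw [hy]
      push_cast [Finset.sum_apply, Pi.smul_apply, smul_eq_mul]
      rfl
    have herr : ∀ i, |(y i : ℝ) - q * x i| ≤ ε * (M - 1) := by
      intro i
      have h1 : (y i : ℝ) - q * x i = ∑ l ∈ s.attach, ((p l : ℝ) - q * cf l.1) * g l.1 i := by
        rw [hyc i, hxrep i, ← Finset.sum_attach s (fun l => cf l * g l i), Finset.mul_sum,
          ← Finset.sum_sub_distrib]
        exact Finset.sum_congr rfl fun l _ => by ring
      rw [h1]
      calc |∑ l ∈ s.attach, ((p l : ℝ) - q * cf l.1) * g l.1 i|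
          ≤ ∑ l ∈ s.attach, |((p l : ℝ) - q * cf l.1) * g l.1 i| :=
            Finset.abs_sum_le_sum_abs _ _
        _ ≤ ∑ l ∈ s.attach, ε * |g l.1 i| := by
            apply Finset.sum_le_sum
            intro l _
            rw [abs_mul]
            apply mul_le_mul_of_nonneg_right _ (abs_nonneg _)
            have h2 := hp l
            rw [abs_sub_comm] at h2
            exact h2.le
        _ = ε * ∑ l ∈ s.attach, |g l.1 i| := by rw [Finset.mul_sum]
        _ ≤ ε * (M - 1) := by
            apply mul_le_mul_of_nonneg_left _ hε0.le
            rw [hM]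
            rw [Finset.sum_attach s (fun l => |g l i|)]
            have h2 : ∑ l ∈ s, |g l i| ≤ ∑ l ∈ s, ∑ i', |g l i'| :=
              Finset.sum_le_sum fun l _ =>
                Finset.single_le_sum (f := fun i' => |g l i'|) (fun i' _ => abs_nonneg _)
                  (Finset.mem_univ i)
            linarith
    have hεM : ε * (M - 1) ≤ min 1 (x i0) / 2 := by
      have h3 : ε * (2 * M) = min 1 (x i0) := by
        rw [hε]; field_simp
      nlinarith [hε0.le, hmin0.le]
    have hq1 : (1:ℝ) ≤ q := by exact_mod_cast hq0
    have hynn : ∀ i, (0:ℤ) ≤ y i := by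
      intro i
      have h4 := abs_le.mp (herr i) |>.1
      have h5 : (0:ℝ) ≤ (q:ℝ) * x i := mul_nonneg (by positivity) (hx0 i)
      have h6 : min 1 (x i0) ≤ 1 := min_le_left _ _
      have h7 : (-1:ℝ) < (y i : ℝ) := by nlinarith
      have h8 : (-1:ℤ) < y i := by exact_mod_cast h7
      omega
    have hy0 := hL0 y hyL hynn
    have h9 := abs_le.mp (herr i0) |>.1
    have h10 : min 1 (x i0) ≤ x i0 := min_le_right _ _
    have h11 : (0:ℝ) < (y i0 : ℝ) := by nlinarith
    rw [hy0] at h11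
    simp at h11
  haveI : Nonempty (Fin n) := ⟨⟨0, hn⟩⟩
  -- separation
  have hdisj : Disjoint (U : Set _) (stdSimplex ℝ (Fin n)) := by
    rw [Set.disjoint_left]
    intro x hxU hxS
    have hx0 := hkey x hxU hxS.1
    have hsum := hxS.2
    rw [hx0] at hsum
    simp at hsum
  obtain ⟨f, u, v, hfu, huv, hfv⟩ := geometric_hahn_banach_closed_compact
    U.convex (Submodule.closed_of_finiteDimensional U)
    (convex_stdSimplex ℝ _) (isCompact_stdSimplex _ _) hdisj
  have hfU : ∀ a ∈ U, f a = 0 := by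
    intro a ha
    by_contra hfa
    have h1 : ((u + 1) / f a) • a ∈ U := U.smul_mem _ ha
    have h2 := hfu _ h1
    rw [map_smul, smul_eq_mul, div_mul_cancel₀ _ hfa] at h2
    linarith
  have hu0 : 0 < u := by
    have h := hfu 0 U.zero_mem
    rwa [map_zero] at h
  have hsingle : ∀ i, Pi.single i (1:ℝ) ∈ stdSimplex ℝ (Fin n) := by
    intro i
    constructor
    · intro j
      rcases eq_or_ne j i with rfl | hji
      · simp
      · simp [Pi.single_apply, hji]
    · rw [Finset.sum_pi_single']
      simp
  set wR : Fin n → ℝ := fun i => f (Pi.single i 1) with hwR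
  have hwRpos : ∀ i, 0 < wR i := fun i => lt_trans (lt_trans hu0 huv) (hfv _ (hsingle i))
  have horth : ∀ l ∈ L, ∑ i, wR i * ((l i : ℝ)) = 0 := by
    intro l hl
    have hmem : (fun i => ((l i : ℝ))) ∈ U := by
      rw [hU]
      exact Submodule.subset_span ⟨⟨l, hl⟩, by rw [hg]⟩
    have h0 : f (fun i => ((l i : ℝ))) = 0 := hfU _ hmem
    have hdecomp : (fun i => ((l i : ℝ))) = ∑ i, ((l i : ℝ)) • (Pi.single i (1:ℝ) : Fin n → ℝ) := by
      funext j
      rw [Finset.sum_apply]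
      simp [Pi.single_apply]
    rw [hdecomp, map_sum] at h0
    rw [← h0]
    exact Finset.sum_congr rfl fun i _ => by
      rw [map_smul, smul_eq_mul, mul_comm]
  -- generators
  obtain ⟨S, hS⟩ : (AddSubgroup.toIntSubmodule L).FG := IsNoetherian.noetherian _
  have hSL : ∀ g' ∈ S, g' ∈ L := fun g' hg' => by
    have : g' ∈ AddSubgroup.toIntSubmodule L := hS ▸ Submodule.subset_span hg'
    exact this
  set M : ℝ := 1 + ∑ g' ∈ S, ∑ i, |(g' i : ℝ)| with hM
  have hM1 : 1 ≤ M := by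
    rw [hM]
    have : (0:ℝ) ≤ ∑ g' ∈ S, ∑ i, |(g' i : ℝ)| := by positivity
    linarith
  set a : ℝ := Finset.univ.inf' Finset.univ_nonempty wR with ha
  have ha0 : 0 < a := by
    rw [ha, Finset.lt_inf'_iff]
    exact fun i _ => hwRpos i
  have haw : ∀ i, a ≤ wR i := fun i => Finset.inf'_le _ (Finset.mem_univ i)
  set ε : ℝ := min a (1 / M) / 2 with hε
  have hε0 : 0 < ε := by
    rw [hε]
    have : 0 < min a (1 / M) := lt_min ha0 (by positivity)
    linarith
  obtain ⟨q, hq0, p, hp⟩ := sim_approx wR hε0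
  have hq1 : (1:ℝ) ≤ q := by exact_mod_cast hq0
  have hppos : ∀ i, 0 < p i := by
    intro i
    have h1 := abs_le.mp (hp i).le |>.2
    have h2 : ε ≤ a / 2 := by
      rw [hε]
      have := min_le_left a (1 / M)
      linarith
    have h3 : wR i ≤ (q:ℝ) * wR i := le_mul_of_one_le_left (hwRpos i).le hq1
    have h4 : (0:ℝ) < p i := by nlinarith [haw i]
    exact_mod_cast h4
  have hεM : ε * (M - 1) < 1 := by
    have h2 : ε ≤ 1 / M / 2 := by
      rw [hε]
      have := min_le_right a (1 / M)
      linarith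
    have h3 : (1 / M) * M = 1 := by field_simp
    nlinarith [hε0.le]
  have hgen : ∀ g' ∈ S, ∑ i, p i * g' i = 0 := by
    intro g' hg'
    have h0 := horth g' (hSL g' hg')
    have h1 : ((∑ i, p i * g' i : ℤ) : ℝ)
        = ∑ i, ((p i : ℝ) - q * wR i) * (g' i : ℝ) + q * ∑ i, wR i * (g' i : ℝ) := by
      push_cast
      rw [Finset.mul_sum, ← Finset.sum_add_distrib]
      exact Finset.sum_congr rfl fun i _ => by ring
    rw [h0, mul_zero, add_zero] at h1
    have h2 : |((∑ i, p i * g' i : ℤ) : ℝ)| < 1 := by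
      rw [h1]
      calc |∑ i, ((p i : ℝ) - q * wR i) * (g' i : ℝ)|
          ≤ ∑ i, |((p i : ℝ) - q * wR i) * (g' i : ℝ)| := Finset.abs_sum_le_sum_abs _ _
        _ ≤ ∑ i, ε * |(g' i : ℝ)| := by
            apply Finset.sum_le_sum
            intro i _
            rw [abs_mul]
            apply mul_le_mul_of_nonneg_right _ (abs_nonneg _)
            have h3 := hp i
            rw [abs_sub_comm] at h3
            exact h3.le
        _ = ε * ∑ i, |(g' i : ℝ)| := by rw [Finset.mul_sum]
        _ ≤ ε * (M - 1) := by
            apply mul_le_mul_of_nonneg_left _ hε0.le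
            rw [hM]
            have h4 : ∑ i, |(g' i : ℝ)| ≤ ∑ g'' ∈ S, ∑ i, |(g'' i : ℝ)| :=
              Finset.single_le_sum (f := fun g'' => ∑ i, |(g'' i : ℝ)|)
                (fun g'' _ => by positivity) hg'
            linarith
        _ < 1 := hεM
    have h5 : |(∑ i, p i * g' i : ℤ)| < 1 := by exact_mod_cast h2
    exact Int.abs_lt_one_iff.mp h5
  have hall : ∀ x, x ∈ Submodule.span ℤ (S : Set (Fin n → ℤ)) → ∑ i, p i * x i = 0 := by
    intro x hx
    induction hx using Submodule.span_induction with
    | mem x hx => exact hgen x hx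
    | zero => simp
    | add x y hx hy ihx ihy =>
        simp only [Pi.add_apply, mul_add, Finset.sum_add_distrib, ihx, ihy, add_zero]
    | smul z x hx ih =>
        simp only [Pi.smul_apply, smul_eq_mul]
        rw [Finset.sum_congr rfl fun i _ => (mul_left_comm (p i) z (x i)), ← Finset.mul_sum, ih,
          mul_zero]
  exact ⟨p, hppos, fun l hl => hall l (by rw [hS]; exact hl)⟩
end

section
/- Let k be a field, let L be a subgroup of ℤ^n with L ∩ ℕ^n = {0}, and let I_L ⊆ k[x_1,…,x_n] be the lattice ideal generated by all binomials x^u − x^v with u, v ∈ ℕ^n and u − v ∈ L. Then there exists a weight vector w : Fin n → ℕ with w_i > 0 for all i such that every generator x^u − x^v of I_L (with u, v ∈ ℕ^n, u − v ∈ L) is weighted homogeneous with respect to w; consequently I_L is a homogeneous ideal for a grading in which each variable has positive integer degree. -/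
open MvPolynomial

open Matrix Finset in
lemma farkas (n : ℕ) : ∀ (m : ℕ) (g : Fin m → (Fin n → ℚ)) (x : Fin n → ℚ),
    (∃ c : Fin m → ℚ, (∀ j, 0 ≤ c j) ∧ x = ∑ j, c j • g j) ∨
    (∃ w : Fin n → ℚ, (∀ j, 0 ≤ w ⬝ᵥ g j) ∧ w ⬝ᵥ x < 0) := by
  intro m
  induction m with
  | zero =>
    intro g x
    by_cases hx : x = 0
    · exact Or.inl ⟨0, fun j => le_refl _, by simp [hx]⟩
    · refine Or.inr ⟨-x, fun j => j.elim0, ?_⟩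
      have h1 : x ⬝ᵥ x ≠ 0 := fun h => hx (dotProduct_self_eq_zero.mp h)
      have h2 : 0 ≤ x ⬝ᵥ x := Finset.sum_nonneg fun i _ => mul_self_nonneg _
      have : 0 < x ⬝ᵥ x := lt_of_le_of_ne h2 (Ne.symm h1)
      simpa [neg_dotProduct] using this
  | succ m ih =>
    intro g x
    set g0 : Fin n → ℚ := g 0 with hg0
    set gt : Fin m → Fin n → ℚ := fun j => g j.succ with hgt
    rcases ih gt x with ⟨c, hc, hx⟩ | ⟨w, hw, hwx⟩
    · refine Or.inl ⟨Fin.cons 0 c, ?_, ?_⟩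
      · intro j
        refine Fin.cases ?_ ?_ j
        · simp
        · intro i; simpa using hc i
      · rw [Fin.sum_univ_succ]
        simpa using hx
    · by_cases hpos : 0 ≤ w ⬝ᵥ g0
      · refine Or.inr ⟨w, ?_, hwx⟩
        intro j
        refine Fin.cases hpos (fun i => hw i) j
      · push_neg at hpos
        have hne : w ⬝ᵥ g0 ≠ 0 := ne_of_lt hpos
        set α : Fin m → ℚ := fun j => (w ⬝ᵥ gt j) / (w ⬝ᵥ g0) with hα
        set β : ℚ := (w ⬝ᵥ x) / (w ⬝ᵥ g0) with hβ
        set g' : Fin m → Fin n → ℚ := fun j => gt j - α j • g0 with hg'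
        set x' : Fin n → ℚ := x - β • g0 with hx'
        rcases ih g' x' with ⟨c, hc, hxc⟩ | ⟨u, hu, hux⟩
        · -- x = Σ c j • gt j + (β - Σ c j * α j) • g0
          have hβpos : 0 < β := div_pos_of_neg_of_neg hwx hpos
          have hαnp : ∀ j, α j ≤ 0 := fun j => div_nonpos_of_nonneg_of_nonpos (hw j) (le_of_lt hpos)
          set lam : ℚ := β - ∑ j, c j * α j with hlam
          have hlamnn : 0 ≤ lam := by
            have : ∑ j, c j * α j ≤ 0 :=
              Finset.sum_nonpos fun j _ => mul_nonpos_of_nonneg_of_nonpos (hc j) (hαnp j)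
            simp only [hlam]; linarith
          refine Or.inl ⟨Fin.cons lam c, ?_, ?_⟩
          · intro j
            refine Fin.cases (by simpa using hlamnn) (fun i => by simpa using hc i) j
          · rw [Fin.sum_univ_succ]
            simp only [Fin.cons_zero, Fin.cons_succ]
            have : x = x' + β • g0 := by simp [hx']
            rw [this, hxc]
            simp only [hg', smul_sub, Finset.sum_sub_distrib, smul_smul, hlam, sub_smul,
              Finset.sum_smul]
            abel
        · -- w' := u - ((u ⬝ᵥ g0)/(w ⬝ᵥ g0)) • w
          set γ : ℚ := (u ⬝ᵥ g0) / (w ⬝ᵥ g0) with hγ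
          set w' : Fin n → ℚ := u - γ • w with hw'
          have key : ∀ y : Fin n → ℚ, w' ⬝ᵥ y = u ⬝ᵥ y - γ * (w ⬝ᵥ y) := by
            intro y
            simp [hw', sub_dotProduct, smul_dotProduct, smul_eq_mul]
          refine Or.inr ⟨w', ?_, ?_⟩
          · intro j
            refine Fin.cases ?_ ?_ j
            · rw [key, hγ, div_mul_cancel₀ _ hne]
              simp [hg0]
            · intro i
              have h1 := hu i
              have e1 : u ⬝ᵥ g' i = u ⬝ᵥ gt i - α i * (u ⬝ᵥ g0) := by
                simp [hg', dotProduct_sub, dotProduct_smul, smul_eq_mul]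
              have e2 : w' ⬝ᵥ g i.succ = u ⬝ᵥ g' i := by
                rw [key, e1]
                simp only [hα, hγ]
                have egt : gt i = g i.succ := rfl
                rw [egt]
                ring
              rw [e2]
              exact h1
          · have e1 : u ⬝ᵥ x' = u ⬝ᵥ x - β * (u ⬝ᵥ g0) := by
              simp [hx', dotProduct_sub, dotProduct_smul, smul_eq_mul]
            have e2 : w' ⬝ᵥ x = u ⬝ᵥ x' := by
              rw [key, e1]
              simp only [hβ, hγ]
              ring
            rw [e2]
            exact hux

open Matrix Finset in
lemma farkas' {n : ℕ} {ι : Type*} [Fintype ι] (g : ι → (Fin n → ℚ)) (x : Fin n → ℚ) :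
    (∃ c : ι → ℚ, (∀ j, 0 ≤ c j) ∧ x = ∑ j, c j • g j) ∨
    (∃ w : Fin n → ℚ, (∀ j, 0 ≤ w ⬝ᵥ g j) ∧ w ⬝ᵥ x < 0) := by
  classical
  obtain ⟨e⟩ : Nonempty (ι ≃ Fin (Fintype.card ι)) := ⟨Fintype.equivFin ι⟩
  rcases farkas n (Fintype.card ι) (g ∘ e.symm) x with ⟨c, hc, hx⟩ | ⟨w, hw, hwx⟩
  · refine Or.inl ⟨c ∘ e, fun j => hc _, ?_⟩
    rw [hx]
    rw [← e.symm.sum_comp (fun j => (c ∘ e) j • g j)]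
    simp [Function.comp]
  · exact Or.inr ⟨w, fun j => by simpa using hw (e j), hwx⟩

open Matrix Finset in
lemma exists_rat_weight {n : ℕ} (L : AddSubgroup (Fin n → ℤ))
    (hL : (L : Set (Fin n → ℤ)) ∩ {v | ∀ i, 0 ≤ v i} = {0}) :
    ∃ W : Fin n → ℚ, (∀ i, 0 < W i) ∧ ∀ l ∈ L, ∑ i, W i * (l i : ℚ) = 0 := by
  classical
  -- `L` is finitely generated as a `ℤ`-module
  set L' : Submodule ℤ (Fin n → ℤ) := AddSubgroup.toIntSubmodule L with hL'
  have hfg : L'.FG := IsNoetherian.noetherian L'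
  obtain ⟨m, lam, hspan⟩ := Submodule.fg_iff_exists_fin_generating_family.mp hfg
  have hlam_mem : ∀ j, lam j ∈ L := by
    intro j
    have : lam j ∈ L' := hspan ▸ Submodule.subset_span (Set.mem_range_self j)
    exact this
  set q : (Fin n → ℤ) → (Fin n → ℚ) := fun v i => (v i : ℚ) with hq
  -- for each coordinate i, find a good nonnegative weight positive at i
  have key : ∀ i : Fin n, ∃ W : Fin n → ℚ,
      (∀ j, W ⬝ᵥ q (lam j) = 0) ∧ (∀ k, 0 ≤ W k) ∧ 0 < W i := by
    intro i
    set g : (Fin m ⊕ Fin m) ⊕ Fin n → (Fin n → ℚ) :=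
      Sum.elim (Sum.elim (fun j => q (lam j)) (fun j => -q (lam j)))
        (fun j => Pi.single j 1) with hg
    rcases farkas' g (-Pi.single i 1) with ⟨c, hc, hx⟩ | ⟨w, hw, hwx⟩
    · -- contradiction with hL
      exfalso
      set r : Fin m → ℚ := fun j => c (Sum.inl (Sum.inr j)) - c (Sum.inl (Sum.inl j)) with hr
      set v : Fin n → ℚ := ∑ j, r j • q (lam j) with hv
      have hveq : v = (Pi.single i 1 : Fin n → ℚ) + ∑ j, c (Sum.inr j) • (Pi.single j 1 : Fin n → ℚ) := by
        have hx' := hx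
        rw [Fintype.sum_sum_type, Fintype.sum_sum_type] at hx'
        simp only [hg, Sum.elim_inl, Sum.elim_inr] at hx'
        have : ∑ j, r j • q (lam j)
            = ∑ j, c (Sum.inl (Sum.inr j)) • q (lam j)
              - ∑ j, c (Sum.inl (Sum.inl j)) • q (lam j) := by
          rw [← Finset.sum_sub_distrib]
          refine Finset.sum_congr rfl fun j _ => ?_
          rw [hr, sub_smul]
        rw [hv, this]
        have h2 : ∑ j, c (Sum.inl (Sum.inr j)) • (-q (lam j))
            = - ∑ j, c (Sum.inl (Sum.inr j)) • q (lam j) := by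
          rw [← Finset.sum_neg_distrib]
          refine Finset.sum_congr rfl fun j _ => ?_
          rw [smul_neg]
        rw [h2] at hx'
        -- hx' : -single i 1 = A + (-B) + C  where v = B - A
        linear_combination (norm := module) hx'
      have hsum : ∀ k, (∑ j, c (Sum.inr j) • (Pi.single j 1 : Fin n → ℚ)) k
          = c (Sum.inr k) := by
        intro k
        rw [Finset.sum_apply]
        simp [Pi.single_apply]
      have hvnn : ∀ k, 0 ≤ v k := by
        intro k
        rw [hveq, Pi.add_apply, hsum, Pi.single_apply]
        have h2 := hc (Sum.inr k)
        split_ifs <;> linarith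
      have hvi : 1 ≤ v i := by
        rw [hveq, Pi.add_apply, hsum, Pi.single_apply, if_pos rfl]
        have h2 := hc (Sum.inr i)
        linarith
      -- clear denominators
      set N : ℤ := ∏ j, ((r j).den : ℤ) with hN
      set t : Fin m → ℤ := fun j => ∏ k ∈ univ.erase j, ((r k).den : ℤ) with ht
      set a : Fin m → ℤ := fun j => (r j).num * t j with ha
      have hNpos : 0 < N := Finset.prod_pos fun j _ => by exact_mod_cast (r j).pos
      have haq : ∀ j, (a j : ℚ) = (N : ℚ) * r j := by
        intro j
        have hNj : N = ((r j).den : ℤ) * t j :=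
          (Finset.mul_prod_erase univ _ (mem_univ j)).symm
        calc (a j : ℚ) = ((r j).num : ℚ) * (t j : ℚ) := by rw [ha]; push_cast; ring
          _ = (((r j).den : ℚ) * r j) * (t j : ℚ) := by rw [Rat.den_mul_eq_num]
          _ = (N : ℚ) * r j := by rw [hNj]; push_cast; ring
      set z : Fin n → ℤ := ∑ j, a j • lam j with hz
      have hzL : z ∈ L := by
        have : z ∈ L' := Submodule.sum_mem _ fun j _ =>
          Submodule.smul_mem _ _ (hlam_mem j)
        exact this
      have hzk : ∀ k, (z k : ℚ) = (N : ℚ) * v k := by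
        intro k
        have h1 : z k = ∑ j, a j * lam j k := by
          rw [hz, Finset.sum_apply]
          exact Finset.sum_congr rfl fun j _ => rfl
        have h2 : v k = ∑ j, r j * (lam j k : ℚ) := by
          rw [hv, Finset.sum_apply]
          exact Finset.sum_congr rfl fun j _ => rfl
        rw [h1, h2, Finset.mul_sum]
        push_cast
        refine Finset.sum_congr rfl fun j _ => ?_
        rw [← mul_assoc, ← haq j]
      have hzmem : z ∈ (L : Set (Fin n → ℤ)) ∩ {v | ∀ i, 0 ≤ v i} := by
        refine ⟨hzL, fun k => ?_⟩
        have : (0:ℚ) ≤ (z k : ℚ) := by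
          rw [hzk]
          exact mul_nonneg (le_of_lt (by exact_mod_cast hNpos)) (hvnn k)
        exact_mod_cast this
      rw [hL] at hzmem
      have hz0 : z = 0 := hzmem
      have : (0:ℚ) < (z i : ℚ) := by
        rw [hzk]
        have : (0:ℚ) < (N:ℚ) := by exact_mod_cast hNpos
        nlinarith
      rw [hz0] at this
      simp at this
    · -- the separating functional works
      refine ⟨w, fun j => ?_, fun k => ?_, ?_⟩
      · have h1 := hw (Sum.inl (Sum.inl j))
        have h2 := hw (Sum.inl (Sum.inr j))
        simp only [hg, Sum.elim_inl, Sum.elim_inr, dotProduct_neg] at h1 h2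
        linarith
      · have h1 := hw (Sum.inr k)
        simp only [hg, Sum.elim_inr] at h1
        rwa [dotProduct_single, mul_one] at h1
      · rw [dotProduct_neg, dotProduct_single, mul_one] at hwx
        linarith
  -- combine the weights
  choose Wf h1 h2 h3 using key
  refine ⟨fun k => ∑ i, Wf i k, fun k => ?_, ?_⟩
  · exact Finset.sum_pos' (fun i _ => h2 i k) ⟨k, mem_univ k, h3 k⟩
  · -- orthogonality via a linear map
    have hadd : ∀ x y : Fin n → ℤ,
        ∑ k, (∑ i, Wf i k) * ((x + y) k : ℚ) =
        ∑ k, (∑ i, Wf i k) * (x k : ℚ) + ∑ k, (∑ i, Wf i k) * (y k : ℚ) := by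
      intro x y
      rw [← Finset.sum_add_distrib]
      refine Finset.sum_congr rfl fun k _ => ?_
      have : ((x + y) k : ℚ) = (x k : ℚ) + (y k : ℚ) := by
        rw [Pi.add_apply]; push_cast; ring
      rw [this, mul_add]
    set φ : (Fin n → ℤ) →ₗ[ℤ] ℚ :=
      { toFun := fun l => ∑ k, (∑ i, Wf i k) * (l k : ℚ)
        map_add' := hadd
        map_smul' := by
          intro zc x
          simp only [RingHom.id_apply, Pi.smul_apply, smul_eq_mul, zsmul_eq_mul]
          rw [Finset.mul_sum]
          refine Finset.sum_congr rfl fun k _ => ?_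
          push_cast
          ring } with hφ
    have hgen : ∀ j, φ (lam j) = 0 := by
      intro j
      have : φ (lam j) = ∑ i, (Wf i ⬝ᵥ q (lam j)) := by
        simp only [hφ, LinearMap.coe_mk, AddHom.coe_mk, dotProduct]
        rw [Finset.sum_comm]
        refine Finset.sum_congr rfl fun k _ => ?_
        rw [Finset.sum_mul]
      rw [this]
      exact Finset.sum_eq_zero fun i _ => h1 i j
    have hker : L' ≤ LinearMap.ker φ := by
      rw [← hspan, Submodule.span_le]
      rintro x ⟨j, rfl⟩
      exact hgen j
    intro l hl
    exact hker hl

open Matrix Finset in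
lemma exists_nat_weight {n : ℕ} (L : AddSubgroup (Fin n → ℤ))
    (hL : (L : Set (Fin n → ℤ)) ∩ {v | ∀ i, 0 ≤ v i} = {0}) :
    ∃ w : Fin n → ℕ, (∀ i, 0 < w i) ∧ ∀ l ∈ L, ∑ i, (w i : ℤ) * l i = 0 := by
  classical
  obtain ⟨W, hWpos, hWorth⟩ := exists_rat_weight L hL
  set D : ℕ := ∏ i, (W i).den with hD
  set t : Fin n → ℕ := fun i => ∏ k ∈ univ.erase i, (W k).den with ht
  have htpos : ∀ i, 0 < t i := fun i => Finset.prod_pos fun k _ => (W k).pos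
  have hnum_pos : ∀ i, 0 < (W i).num := fun i => Rat.num_pos.mpr (hWpos i)
  set w : Fin n → ℕ := fun i => ((W i).num * (t i : ℤ)).toNat with hw
  have hwq : ∀ i, ((w i : ℤ) : ℚ) = W i * D := by
    intro i
    have hDi : D = (W i).den * t i := (Finset.mul_prod_erase univ _ (mem_univ i)).symm
    have hnn : (0:ℤ) ≤ (W i).num * (t i : ℤ) :=
      mul_nonneg (le_of_lt (hnum_pos i)) (by exact_mod_cast (htpos i).le)
    rw [hw, Int.toNat_of_nonneg hnn]
    calc (((W i).num * (t i : ℤ) : ℤ) : ℚ) = ((W i).num : ℚ) * (t i : ℚ) := by push_cast; ring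
      _ = (((W i).den : ℚ) * W i) * (t i : ℚ) := by rw [Rat.den_mul_eq_num]
      _ = W i * D := by rw [hDi]; push_cast; ring
  refine ⟨w, fun i => ?_, fun l hl => ?_⟩
  · have hpos : (0:ℤ) < (W i).num * (t i : ℤ) :=
      mul_pos (hnum_pos i) (by exact_mod_cast htpos i)
    have : w i = ((W i).num * (t i : ℤ)).toNat := rfl
    rw [this]
    omega
  · have : ((∑ i, (w i : ℤ) * l i : ℤ) : ℚ) = (D : ℚ) * ∑ i, W i * (l i : ℚ) := by
      rw [Int.cast_sum, Finset.mul_sum]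
      refine Finset.sum_congr rfl fun i _ => ?_
      rw [Int.cast_mul, hwq i]
      ring
    rw [hWorth l hl, mul_zero] at this
    exact_mod_cast this

/-- For a field `k` and a subgroup `L ≤ ℤ^n` with `L ∩ ℕ^n = {0}`, there is a
weight vector `w : Fin n → ℕ` with all `w i > 0` such that every binomial generator
`x^u − x^v` (with `u − v ∈ L`) of the lattice ideal `I_L` is weighted homogeneous with
respect to `w`; consequently the lattice ideal is homogeneous for the associated grading. -/
theorem lattice_ideal_homogeneous (n : ℕ) (k : Type*) [Field k]
    (L : AddSubgroup (Fin n → ℤ))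
    (hL : (L : Set (Fin n → ℤ)) ∩ {v | ∀ i, 0 ≤ v i} = {0}) :
    ∃ w : Fin n → ℕ, (∀ i, 0 < w i) ∧
      (∀ u v : Fin n →₀ ℕ, (fun i => (u i : ℤ) - (v i : ℤ)) ∈ L →
        ∃ d : ℕ, IsWeightedHomogeneous w
          ((monomial u (1 : k)) - monomial v 1) d) ∧
      @Ideal.IsHomogeneous ℕ _ _ _ _ _ (weightedHomogeneousSubmodule k w) _ _
        (weightedGradedAlgebra k w)
        (Ideal.span {p : MvPolynomial (Fin n) k |
          ∃ u v : Fin n →₀ ℕ, (fun i => (u i : ℤ) - (v i : ℤ)) ∈ L ∧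
            p = (monomial u 1) - monomial v 1}) := by
  classical
  obtain ⟨w, hwpos, horth⟩ := exists_nat_weight L hL
  have hweight : ∀ u : Fin n →₀ ℕ, Finsupp.weight w u = ∑ i, u i * w i := by
    intro u
    rw [Finsupp.weight_apply, Finsupp.sum_fintype]
    · exact Finset.sum_congr rfl fun i _ => by simp [smul_eq_mul]
    · intro i; simp
  have hkey : ∀ u v : Fin n →₀ ℕ, (fun i => (u i : ℤ) - (v i : ℤ)) ∈ L →
      ∃ d : ℕ, IsWeightedHomogeneous w ((monomial u (1 : k)) - monomial v 1) d := by
    intro u v huv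
    have hz := horth _ huv
    have heq : Finsupp.weight w u = Finsupp.weight w v := by
      have h1 : (∑ i, (u i : ℤ) * w i) = ∑ i, (v i : ℤ) * w i := by
        have h2 : ∑ i, (w i : ℤ) * ((u i : ℤ) - (v i : ℤ)) = 0 := hz
        have h3 : ∑ i, ((w i : ℤ) * (u i : ℤ) - (w i : ℤ) * (v i : ℤ)) = 0 := by
          rw [← h2]; exact Finset.sum_congr rfl fun i _ => by ring
        rw [Finset.sum_sub_distrib, sub_eq_zero] at h3
        calc (∑ i, (u i : ℤ) * w i) = ∑ i, (w i : ℤ) * u i :=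
              Finset.sum_congr rfl fun i _ => mul_comm _ _
          _ = ∑ i, (w i : ℤ) * v i := h3
          _ = ∑ i, (v i : ℤ) * w i := Finset.sum_congr rfl fun i _ => mul_comm _ _
      rw [hweight, hweight]
      have := h1
      exact_mod_cast this
    refine ⟨Finsupp.weight w u, ?_⟩
    have h1 : IsWeightedHomogeneous w (monomial u (1:k)) (Finsupp.weight w u) :=
      isWeightedHomogeneous_monomial w u 1 rfl
    have h2 : IsWeightedHomogeneous w (monomial v (1:k)) (Finsupp.weight w u) :=
      isWeightedHomogeneous_monomial w v 1 heq.symm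
    exact Submodule.sub_mem (weightedHomogeneousSubmodule k w (Finsupp.weight w u)) h1 h2
  refine ⟨w, hwpos, hkey, ?_⟩
  letI : GradedRing (weightedHomogeneousSubmodule k w) := weightedGradedAlgebra k w
  refine Ideal.homogeneous_span _ _ fun x hx => ?_
  obtain ⟨u, v, huv, rfl⟩ := hx
  obtain ⟨d, hd⟩ := hkey u v huv
  exact ⟨d, hd⟩
end

section
/- Let E ⊆ ℤ^n satisfy E + ℕ^n ⊆ E (so E is the exponent set of a monomial module), and suppose E is co-artinian, i.e., for every b ∈ ℤ^n the set {a ∈ E : a ≤ b componentwise} is finite. Define min(E) = {a ∈ E : a − e_i ∉ E for all i}, where e_i is the i-th standard basis vector. Then E = min(E) + ℕ^n; that is, a co-artinian monomial module is generated by its set of minimal monomials. -/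
/-- A co-artinian monomial module is generated by its minimal monomials:
if `E + ℕ^n ⊆ E` and `{a ∈ E : a ≤ b}` is finite for all `b`, then with
`min(E) = {a ∈ E : a − eᵢ ∉ E for all i}` one has `E = min(E) + ℕ^n`. -/
theorem coartinian_generated_by_minimals (n : ℕ) (E : Set (Fin n → ℤ))
    (hE : ∀ a ∈ E, ∀ u : Fin n → ℤ, (∀ i, 0 ≤ u i) → a + u ∈ E)
    (hco : ∀ b : Fin n → ℤ, {a ∈ E | a ≤ b}.Finite) :
    E = {a : Fin n → ℤ |
      ∃ m ∈ {a ∈ E | ∀ i : Fin n, a - Pi.single i 1 ∉ E},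
        ∃ u : Fin n → ℤ, (∀ i, 0 ≤ u i) ∧ a = m + u} := by
  ext a
  constructor
  · intro ha
    obtain ⟨m, ⟨hmE, hma⟩, hmin⟩ :=
      (hco a).exists_minimalFor id _ ⟨a, ha, le_refl a⟩
    refine ⟨m, ⟨hmE, ?_⟩, fun i => a i - m i, fun i => sub_nonneg.2 (hma i), ?_⟩
    · intro i hi
      have hle : m - Pi.single i 1 ≤ m := by
        intro j
        by_cases h : j = i
        · subst h; simp
        · simp [Pi.single_eq_of_ne h]
      have h2 : m = m - Pi.single i 1 := le_antisymm (hmin (j := m - Pi.single i 1) ⟨hi, hle.trans hma⟩ hle) hle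
      have h3 := congrFun h2 i
      simp at h3
      omega
    · funext j; simp
  · rintro ⟨m, ⟨hmE, _⟩, u, hu, rfl⟩
    exact hE m hmE u hu
end

section
/- Let L be a subgroup of ℤ^n with L ∩ ℕ^n = {0}, let E = L + ℕ^n be the exponent set of the lattice module M_L, and define min(E) = {a ∈ E : a − e_i ∉ E for all i}. Then min(E) is L-invariant (ℓ + min(E) = min(E) for every ℓ ∈ L), and for every b ∈ ℤ^n the set {a ∈ min(E) : a ≤ b componentwise} is finite. -/
/-- For a subgroup `L ≤ ℤ^n` with `L ∩ ℕ^n = {0}` and exponent set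
`E = L + ℕ^n` of the lattice module, the set `min(E) = {a ∈ E : a − eᵢ ∉ E for all i}`
of minimal exponents is `L`-invariant, and `{a ∈ min(E) : a ≤ b}` is finite for every
`b ∈ ℤ^n`. -/
theorem minimals_invariant_and_finite_below (n : ℕ) (L : AddSubgroup (Fin n → ℤ))
    (hL : (L : Set (Fin n → ℤ)) ∩ {v | ∀ i, 0 ≤ v i} = {0})
    (E : Set (Fin n → ℤ))
    (hE : E = {a | ∃ l ∈ L, ∃ u : Fin n → ℤ, (∀ i, 0 ≤ u i) ∧ a = l + u})
    (minE : Set (Fin n → ℤ))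
    (hmin : minE = {a ∈ E | ∀ i : Fin n, a - Pi.single i 1 ∉ E}) :
    (∀ l ∈ L, {a : Fin n → ℤ | ∃ m ∈ minE, a = l + m} = minE) ∧
      ∀ b : Fin n → ℤ, {a ∈ minE | a ≤ b}.Finite := by
  -- E is closed under translation by L
  have hEadd : ∀ l ∈ L, ∀ a ∈ E, l + a ∈ E := by
    intro l hl a ha
    rw [hE] at ha ⊢
    obtain ⟨l', hl', u, hu, rfl⟩ := ha
    exact ⟨l + l', L.add_mem hl hl', u, hu, by ring⟩
  -- E is closed under adding nonnegative vectors
  have hEup : ∀ a ∈ E, ∀ v : Fin n → ℤ, (∀ i, 0 ≤ v i) → a + v ∈ E := by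
    intro a ha v hv
    rw [hE] at ha ⊢
    obtain ⟨l, hl, u, hu, rfl⟩ := ha
    exact ⟨l, hl, u + v, fun i => add_nonneg (hu i) (hv i), by ring⟩
  -- minE is closed under translation by L
  have hmem : ∀ l ∈ L, ∀ a ∈ minE, l + a ∈ minE := by
    intro l hl a ha
    rw [hmin] at ha ⊢
    obtain ⟨haE, hamin⟩ := ha
    refine ⟨hEadd l hl a haE, fun i hi => hamin i ?_⟩
    have h2 := hEadd (-l) (L.neg_mem hl) _ hi
    have heq : -l + (l + a - Pi.single i 1) = a - Pi.single i 1 := by ring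
    rwa [heq] at h2
  -- distinct elements of minE are incomparable
  have hanti : ∀ a ∈ minE, ∀ a' ∈ minE, a' ≤ a → a' = a := by
    intro a ha a' ha' hle
    by_contra hne
    obtain ⟨i, hi⟩ : ∃ i, a' i < a i := by
      by_contra h
      push_neg at h
      exact hne (le_antisymm hle h)
    rw [hmin] at ha ha'
    apply ha.2 i
    have heq : a' + (a - Pi.single i 1 - a') = a - Pi.single i 1 := by ring
    rw [← heq]
    apply hEup a' ha'.1
    intro j
    have hj : a' j ≤ a j := hle j
    simp only [Pi.sub_apply, Pi.add_apply, Pi.single_apply]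
    by_cases h : j = i
    · rw [if_pos h, h]; omega
    · rw [if_neg h]; omega
  constructor
  · intro l hl
    ext a
    simp only [Set.mem_setOf_eq]
    constructor
    · rintro ⟨m, hm, rfl⟩
      exact hmem l hl m hm
    · intro ha
      exact ⟨-l + a, hmem (-l) (L.neg_mem hl) a ha, by ring⟩
  · intro b
    set S := {a ∈ minE | a ≤ b} with hS
    set f : (Fin n → ℤ) → (Fin n → ℕ) := fun a i => (b i - a i).toNat with hf
    have hinj : Set.InjOn f S := by
      intro a ha a' ha' hfeq
      funext i
      have h1 : a i ≤ b i := ha.2 i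
      have h2 : a' i ≤ b i := ha'.2 i
      have h3 : (b i - a i).toNat = (b i - a' i).toNat := congrFun hfeq i
      omega
    have hantiT : IsAntichain (· ≤ ·) (f '' S) := by
      rintro x ⟨a, ha, rfl⟩ y ⟨a', ha', rfl⟩ hne hle
      apply hne
      have hle' : a' ≤ a := by
        intro i
        have h1 : a i ≤ b i := ha.2 i
        have h2 : a' i ≤ b i := ha'.2 i
        have h3 : (b i - a i).toNat ≤ (b i - a' i).toNat := hle i
        show a' i ≤ a i
        omega
      rw [hanti a ha.1 a' ha'.1 hle']
    have hpwo : Set.IsPWO (f '' S) :=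
      Set.isPWO_of_wellQuasiOrderedLE (f '' S)
    have hfin : (f '' S).Finite := hantiT.finite_of_partiallyWellOrderedOn hpwo
    exact Set.Finite.of_finite_image hfin hinj
end
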